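/- Let A ∈ ℝ[t]^{n×n} be a matrix polynomial of degree at most d whose rank over the rational function field ℝ(t) is s < n. Then there exists a nonzero vector b ∈ ℝ[t]^{n×1} whose entries all have degree at most s·d such that A·b = 0. -/

import Mathlib

/-!
Over `ℝ(t)` choose a nonsingular `s × s` submatrix `A[r, c₀]` and a column `j` outside `c₀`.
Laplace expansion along the first row shows that `A` maps the vector of signed `s × s` minors of
`A[r, (j, c₀)]` to the vector of bordered minors `det A[(i, r), (j, c₀)]`, which vanish because
they have size `s + 1 > rank A`. Its `j`-th entry is `det A[r, c₀] ≠ 0`, and every entry is an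
`s × s` minor of `A`, hence of degree at most `s·d`.
-/

open Polynomial

namespace Matrix

section Field

variable {K m n : Type*} [Field K] [Fintype n]

theorem exists_linearIndependent_cols_of_rank_eq (M : Matrix m n K) {s : ℕ} (h : M.rank = s) :
    ∃ c : Fin s → n, LinearIndependent K fun k => M.col (c k) := by
  obtain ⟨κ, a, ha, hspan, hli⟩ := exists_linearIndependent' K M.col
  have : Finite κ := Finite.of_injective a ha
  have : Fintype κ := Fintype.ofFinite κ
  have hcard : Fintype.card κ = s := by
    rw [← h, rank_eq_finrank_span_cols, ← hspan, finrank_span_eq_card hli]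
  obtain e := (Fintype.equivFinOfCardEq hcard).symm
  exact ⟨a ∘ e, hli.comp e e.injective⟩

theorem exists_isUnit_submatrix_of_rank_eq [Fintype m] (M : Matrix m n K) {s : ℕ}
    (h : M.rank = s) :
    ∃ (r : Fin s → m) (c : Fin s → n), IsUnit (M.submatrix r c) := by
  obtain ⟨c, hc⟩ := M.exists_linearIndependent_cols_of_rank_eq h
  have hrank : (M.submatrix id c)ᵀ.rank = s := by
    simpa using LinearIndependent.rank_matrix (M := (M.submatrix id c)ᵀ) hc
  obtain ⟨r, hr⟩ := (M.submatrix id c)ᵀ.exists_linearIndependent_cols_of_rank_eq hrank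
  exact ⟨r, c, linearIndependent_rows_iff_isUnit.mp hr⟩

theorem det_submatrix_eq_zero_of_rank_lt (M : Matrix m n K) {k : ℕ} (r : Fin k → m)
    (c : Fin k → n) (h : M.rank < k) : (M.submatrix r c).det = 0 := by
  by_contra hdet
  have hunit : IsUnit (M.submatrix r c) :=
    (isUnit_iff_isUnit_det _).mpr (isUnit_iff_ne_zero.mpr hdet)
  have hle := M.rank_submatrix_le r c
  rw [(M.submatrix r c).rank_of_isUnit hunit, Fintype.card_fin] at hle
  omega

end Field

section CommRing

variable {R m n : Type*} [CommRing R] [DecidableEq n] {s : ℕ}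

def signedMinorVector (M : Matrix m n R) (r : Fin s → m) (c : Fin (s + 1) → n) : n → R :=
  ∑ k, Pi.single (c k) ((-1) ^ (k : ℕ) * (M.submatrix r (c ∘ k.succAbove)).det)

theorem mulVec_signedMinorVector [Fintype n] (M : Matrix m n R) (r : Fin s → m)
    (c : Fin (s + 1) → n) :
    M *ᵥ M.signedMinorVector r c = fun i => (M.submatrix (Fin.cons i r) c).det := by
  ext i
  rw [det_succ_row_zero]
  simp [signedMinorVector, mulVec_sum, mul_comm, mul_assoc]

theorem signedMinorVector_cons_apply_self (M : Matrix m n R) (r : Fin s → m) {j : n}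
    {c : Fin s → n} (hj : ∀ k, c k ≠ j) :
    M.signedMinorVector r (Fin.cons j c) j = (M.submatrix r c).det := by
  simp [signedMinorVector, Fin.sum_univ_succ, Pi.single_apply, (hj _).symm]

theorem natDegree_det_le {ι : Type*} [Fintype ι] [DecidableEq ι] (M : Matrix ι ι R[X])
    {d : ℕ} (h : ∀ i j, (M i j).natDegree ≤ d) : M.det.natDegree ≤ Fintype.card ι * d := by
  rw [det_apply']
  refine natDegree_sum_le_of_forall_le _ _ fun σ _ => natDegree_mul_le.trans ?_
  rw [natDegree_intCast, zero_add]
  refine (natDegree_prod_le _ _).trans ?_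
  exact (Finset.sum_le_sum fun i _ => h (σ i) i).trans_eq
    (by rw [Finset.sum_const, smul_eq_mul, Finset.card_univ])

theorem natDegree_signedMinorVector_le (M : Matrix m n R[X]) (r : Fin s → m)
    (c : Fin (s + 1) → n) {d : ℕ} (h : ∀ i j, (M i j).natDegree ≤ d) (j : n) :
    (M.signedMinorVector r c j).natDegree ≤ s * d := by
  rw [signedMinorVector, Finset.sum_apply]
  refine natDegree_sum_le_of_forall_le _ _ fun k _ => ?_
  rw [Pi.single_apply]
  split_ifs
  · have hsign : ((-1 : R[X]) ^ (k : ℕ)).natDegree ≤ 0 := natDegree_pow_le.trans (by simp)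
    have hminor := natDegree_det_le (M.submatrix r (c ∘ k.succAbove)) fun _ _ => h _ _
    simpa using natDegree_mul_le_of_le hsign hminor
  · rw [natDegree_zero]; exact Nat.zero_le _

end CommRing

end Matrix

open Matrix

/-- If a matrix polynomial `A ∈ ℝ[t]^{n×n}` of degree at most `d`
has rank `s < n` over the rational function field `ℝ(t)`, then there is a nonzero
vector `b ∈ ℝ[t]^{n×1}` whose entries all have degree at most `s·d` with `A·b = 0`. -/
theorem kernel_vector_of_rank_lt
    (n d s : ℕ) (A : Matrix (Fin n) (Fin n) (Polynomial ℝ))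
    (hA : ∀ i j, (A i j).natDegree ≤ d)
    (hrank : (A.map (algebraMap (Polynomial ℝ) (RatFunc ℝ))).rank = s)
    (hs : s < n) :
    ∃ b : Fin n → Polynomial ℝ,
      b ≠ 0 ∧ (∀ i, (b i).natDegree ≤ s * d) ∧ A.mulVec b = 0 := by
  set φ := algebraMap ℝ[X] (RatFunc ℝ)
  have det_map_submatrix {k : ℕ} (r : Fin k → Fin n) (c : Fin k → Fin n) :
      ((A.map φ).submatrix r c).det = φ (A.submatrix r c).det := by
    rw [RingHom.map_det, RingHom.mapMatrix_apply, submatrix_map]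
  obtain ⟨r, c₀, hunit⟩ := (A.map φ).exists_isUnit_submatrix_of_rank_eq hrank
  obtain ⟨j, hj⟩ : ∃ j, ∀ k, c₀ k ≠ j := by
    by_contra! hsurj
    have := Fintype.card_le_of_surjective c₀ hsurj
    simp only [Fintype.card_fin] at this
    omega
  refine ⟨A.signedMinorVector r (Fin.cons j c₀), fun hb => ?_,
    natDegree_signedMinorVector_le _ _ _ hA, ?_⟩
  · have hminor := A.signedMinorVector_cons_apply_self r hj
    rw [hb, Pi.zero_apply] at hminor
    have := (isUnit_iff_isUnit_det _).mp hunit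
    rw [det_map_submatrix, ← hminor, map_zero] at this
    exact not_isUnit_zero this
  · rw [mulVec_signedMinorVector]
    funext i
    apply RatFunc.algebraMap_injective ℝ
    rw [← det_map_submatrix, Pi.zero_apply, map_zero]
    exact det_submatrix_eq_zero_of_rank_lt _ _ _ (by omega)
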